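/- arXiv:2209.07848 — 2 statements merged into one kernel-verified Lean document; each statement's English description precedes it below -/
import Mathlib

section
/- Let φ be a homogeneous quasimorphism on Γ with defect D_φ. If a ∈ Γ is a product of k commutators, then |φ(a)| ≤ (2k−1)·D_φ. -/
/-! A homogeneous quasimorphism is conjugation invariant: `n ↦ φ (g xⁿ g⁻¹) - φ (xⁿ)` is both
linear in `n` and bounded by `2D`. Hence `φ [y, z] = φ (y z y⁻¹) + φ z⁻¹` up to `D`, and the two
terms cancel, so `|φ| ≤ D` on commutators. A product of `k` commutators costs `k - 1` further
defects. -/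

lemma eq_zero_of_forall_nat_mul_abs_le {c C : ℝ} (h : ∀ n : ℕ, n * |c| ≤ C) : c = 0 := by
  by_contra hc
  have hpos : 0 < |c| := abs_pos.mpr hc
  obtain ⟨n, hn⟩ := exists_nat_gt (C / |c|)
  linarith [h n, (div_lt_iff₀ hpos).mp hn]

section Quasimorphism

variable {G : Type*} [Group G]

def HasDefectLE (φ : G → ℝ) (D : ℝ) : Prop :=
  ∀ a b : G, |φ (a * b) - φ a - φ b| ≤ D

def IsHomogeneous (φ : G → ℝ) : Prop :=
  ∀ (a : G) (n : ℤ), φ (a ^ n) = n * φ a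

variable {φ : G → ℝ} {D : ℝ}

namespace IsHomogeneous

lemma map_inv (hh : IsHomogeneous φ) (g : G) : φ g⁻¹ = -φ g := by
  simpa using hh g (-1)

end IsHomogeneous

namespace HasDefectLE

lemma abs_map_mul_le (hφ : HasDefectLE φ D) (a b : G) : |φ (a * b)| ≤ |φ a| + |φ b| + D := by
  have := hφ a b
  calc |φ (a * b)| = |(φ (a * b) - φ a - φ b) + φ a + φ b| := by ring_nf
    _ ≤ |φ (a * b) - φ a - φ b| + |φ a| + |φ b| := abs_add_three _ _ _
    _ ≤ |φ a| + |φ b| + D := by linarith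

lemma abs_map_cons_prod_le (hφ : HasDefectLE φ D)
    (x : G) (l : List G) (hl : ∀ y ∈ x :: l, |φ y| ≤ D) :
    |φ (x :: l).prod| ≤ (2 * l.length + 1) * D := by
  induction l generalizing x with
  | nil => simpa using hl x (by simp)
  | cons y l ih =>
    have hx := hl x List.mem_cons_self
    have htail := ih y fun z hz => hl z (List.mem_cons_of_mem x hz)
    rw [List.prod_cons, List.length_cons]
    push_cast
    linarith [hφ.abs_map_mul_le x (y :: l).prod]

lemma abs_map_conj_sub_le (hφ : HasDefectLE φ D) (hh : IsHomogeneous φ) (g x : G) :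
    |φ (g * x * g⁻¹) - φ x| ≤ 2 * D := by
  have h₁ := hφ (g * x) g⁻¹
  have h₂ := hφ g x
  rw [hh.map_inv] at h₁
  calc |φ (g * x * g⁻¹) - φ x|
      = |(φ (g * x * g⁻¹) - φ (g * x) - -φ g) + (φ (g * x) - φ g - φ x)| := by ring_nf
    _ ≤ |φ (g * x * g⁻¹) - φ (g * x) - -φ g| + |φ (g * x) - φ g - φ x| := abs_add_le _ _
    _ ≤ 2 * D := by linarith

lemma map_conj (hφ : HasDefectLE φ D) (hh : IsHomogeneous φ) (g x : G) :
    φ (g * x * g⁻¹) = φ x := by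
  refine sub_eq_zero.mp (eq_zero_of_forall_nat_mul_abs_le (C := 2 * D) fun n => ?_)
  have hpow : g * x ^ (n : ℤ) * g⁻¹ = (g * x * g⁻¹) ^ (n : ℤ) := (conj_zpow ..).symm
  have := hφ.abs_map_conj_sub_le hh g (x ^ (n : ℤ))
  rwa [hpow, hh, hh, ← mul_sub, abs_mul, Int.cast_natCast, Nat.abs_cast] at this

lemma abs_map_commutator_le (hφ : HasDefectLE φ D) (hh : IsHomogeneous φ) (y z : G) :
    |φ (y * z * y⁻¹ * z⁻¹)| ≤ D := by
  simpa [hφ.map_conj hh, hh.map_inv] using hφ (y * z * y⁻¹) z⁻¹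

end HasDefectLE

end Quasimorphism

/-- If `φ` is a homogeneous quasimorphism with defect at most `D` and
`a` is a product of `k ≥ 1` commutators, then `|φ(a)| ≤ (2k−1)·D`. -/
theorem stmt_10 {Γ : Type*} [Group Γ] (φ : Γ → ℝ) (D : ℝ)
    (hD : ∀ a b : Γ, |φ (a * b) - φ a - φ b| ≤ D)
    (hhom : ∀ (a : Γ) (n : ℤ), φ (a ^ n) = n * φ a)
    (a : Γ) (k : ℕ) (hk : 1 ≤ k)
    (ha : ∃ l : List Γ, l.length = k ∧ (∀ x ∈ l, ∃ y z : Γ, x = y * z * y⁻¹ * z⁻¹) ∧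
      l.prod = a) :
    |φ a| ≤ (2 * (k : ℝ) - 1) * D := by
  obtain ⟨l, rfl, hcomm, rfl⟩ := ha
  have hcomm_le : ∀ x ∈ l, |φ x| ≤ D := fun x hx => by
    obtain ⟨y, z, rfl⟩ := hcomm x hx
    exact HasDefectLE.abs_map_commutator_le hD hhom y z
  cases l with
  | nil => simp at hk
  | cons x l =>
    have := HasDefectLE.abs_map_cons_prod_le hD x l hcomm_le
    simp only [List.length_cons, Nat.cast_add, Nat.cast_one]
    linarith
end

section
/- Let Γ be a group and suppose a,b,c,g ∈ Γ with c = g⁻¹ag and cb = bc. Then the commutator [a,b] equals g·(g⁻¹)^c·g^{bc}·(g⁻¹)^b, where x^y := yxy⁻¹. In particular [a,b] is a product of 4 conjugates of g or g⁻¹. -/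
/-- `x` is a conjugate of `g` or of `g⁻¹`. -/
def IsConjOfOrInv {Γ : Type*} [Group Γ] (g x : Γ) : Prop :=
  ∃ h : Γ, x = h * g * h⁻¹ ∨ x = h * g⁻¹ * h⁻¹

/-- If `c = g⁻¹ a g` commutes with `b`, then
`[a,b] = g · (g⁻¹)^c · g^{bc} · (g⁻¹)^b` where `x^y = y x y⁻¹`; in particular `[a,b]`
is a product of 4 conjugates of `g` or `g⁻¹`. -/
theorem stmt_13 {Γ : Type*} [Group Γ] (a b c g : Γ)
    (hc : c = g⁻¹ * a * g) (hcb : c * b = b * c) :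
    a * b * a⁻¹ * b⁻¹ =
      g * (c * g⁻¹ * c⁻¹) * ((b * c) * g * (b * c)⁻¹) * (b * g⁻¹ * b⁻¹) ∧
    ∃ l : List Γ, l.length = 4 ∧ (∀ x ∈ l, IsConjOfOrInv g x) ∧
      l.prod = a * b * a⁻¹ * b⁻¹ := by
  have key : a * b * a⁻¹ * b⁻¹ =
      g * (c * g⁻¹ * c⁻¹) * ((b * c) * g * (b * c)⁻¹) * (b * g⁻¹ * b⁻¹) := by
    have ha : a = g * c * g⁻¹ := by rw [hc]; group
    subst ha
    have h : c * b = b * c := hcb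
    calc g * c * g⁻¹ * b * (g * c * g⁻¹)⁻¹ * b⁻¹
        = g * (c * g⁻¹ * c⁻¹) * ((c * b) * g * (c*b)⁻¹ * (c*b)) * c⁻¹ * g⁻¹ * b⁻¹ := by group
      _ = g * (c * g⁻¹ * c⁻¹) * ((b * c) * g * (b*c)⁻¹ * (b*c)) * c⁻¹ * g⁻¹ * b⁻¹ := by rw [h]
      _ = g * (c * g⁻¹ * c⁻¹) * ((b * c) * g * (b * c)⁻¹) * (b * g⁻¹ * b⁻¹) := by group
  refine ⟨key, ⟨[g, c * g⁻¹ * c⁻¹, (b*c) * g * (b*c)⁻¹, b * g⁻¹ * b⁻¹], rfl, ?_, by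
    simp [key]; group⟩⟩
  intro x hx
  simp only [List.mem_cons, List.not_mem_nil, or_false] at hx
  rcases hx with h|h|h|h <;> subst h
  · exact ⟨1, Or.inl (by group)⟩
  · exact ⟨c, Or.inr rfl⟩
  · exact ⟨b*c, Or.inl rfl⟩
  · exact ⟨b, Or.inr rfl⟩
end
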